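/- arXiv:1104.2696 — 4 statements merged into one kernel-verified Lean document; each statement's English description precedes it below -/
import Mathlib

section
/- Let F be a fusion system on a finite group S, let K be a strongly F-closed subgroup of S, and let Ω' be a left F|_K-stable K-K-biset, where F|_K denotes the fusion system on K whose morphisms are the morphisms of F between subgroups of K. Then the S-S-biset Ω = S ×_K Ω' ×_K S is left F-stable. -/
/-- The conjugation homomorphism `P → Q` induced by `s ∈ S`, when `s P s⁻¹ ≤ Q`. -/
def conjMap {S : Type*} [Group S] (s : S) (P Q : Subgroup S)
    (h : ∀ p ∈ P, s * p * s⁻¹ ∈ Q) : ↥P →* ↥Q where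
  toFun p := ⟨s * ↑p * s⁻¹, h ↑p p.2⟩
  map_one' := by ext; simp
  map_mul' p q := by ext; simp [mul_assoc]

/-- A fusion system on a group `S`: a set of injective homomorphisms between each pair of
subgroups, containing all conjugations, closed under composition, corestriction to the image,
and inverses of the induced isomorphisms. -/
structure FusionSystem (S : Type*) [Group S] where
  Hom : ∀ P Q : Subgroup S, Set (↥P →* ↥Q)
  injective : ∀ {P Q : Subgroup S} {φ : ↥P →* ↥Q}, φ ∈ Hom P Q → Function.Injective φ
  conj_mem : ∀ (s : S) (P Q : Subgroup S) (h : ∀ p ∈ P, s * p * s⁻¹ ∈ Q),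
    conjMap s P Q h ∈ Hom P Q
  comp_mem : ∀ {P Q R : Subgroup S} {φ : ↥P →* ↥Q} {ψ : ↥Q →* ↥R},
    φ ∈ Hom P Q → ψ ∈ Hom Q R → ψ.comp φ ∈ Hom P R
  restrict_mem : ∀ {P Q : Subgroup S} {φ : ↥P →* ↥Q}, φ ∈ Hom P Q →
    ∃ φ' ∈ Hom P (Q.subtype.comp φ).range, ∀ p : ↥P, (↑(φ' p) : S) = ↑(φ p)
  inv_mem : ∀ {P Q : Subgroup S} {φ : ↥P →* ↥Q}, φ ∈ Hom P Q →
    ∃ ψ ∈ Hom (Q.subtype.comp φ).range P, ∀ p : ↥P, ψ ⟨↑(φ p), ⟨p, rfl⟩⟩ = p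

/-- A subgroup `K ≤ S` is strongly `F`-closed if every `F`-morphism from a subgroup of `K`
to `S` has image contained in `K`. -/
def FusionSystem.StronglyClosed {S : Type*} [Group S] (F : FusionSystem S)
    (K : Subgroup S) : Prop :=
  ∀ (L : Subgroup S), L ≤ K → ∀ φ ∈ F.Hom L ⊤, ∀ l : ↥L, (↑(φ l) : S) ∈ K

/-- An `S`-`S`-biset structure on a type `Ω`: commuting left and right `S`-actions. -/
structure Biset (S : Type*) [Group S] (Ω : Type*) where
  smul : S → Ω → Ω
  rsmul : Ω → S → Ω
  one_smul : ∀ x, smul 1 x = x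
  mul_smul : ∀ s t x, smul (s * t) x = smul s (smul t x)
  rsmul_one : ∀ x, rsmul x 1 = x
  rsmul_mul : ∀ x s t, rsmul x (s * t) = rsmul (rsmul x s) t
  smul_rsmul : ∀ s x t, rsmul (smul s x) t = smul s (rsmul x t)

/-- The left action of a biset is free. -/
def Biset.LeftFree {S : Type*} [Group S] {Ω : Type*} (B : Biset S Ω) : Prop :=
  ∀ s x, B.smul s x = x → s = 1

/-- A left free biset `Ω` is left `F`-stable if for every subgroup `Q ≤ S` and every
`φ ∈ Hom_F(Q,S)`, the `Q`-`S`-bisets `_Q Ω` and `_φ Ω` are isomorphic, i.e. there is a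
bijection `f` with `f (q • x • s) = φ(q) • f x • s`. -/
def Biset.LeftFStable {S : Type*} [Group S] {Ω : Type*} (B : Biset S Ω)
    (F : FusionSystem S) : Prop :=
  B.LeftFree ∧
    ∀ (Q : Subgroup S), ∀ φ ∈ F.Hom Q ⊤, ∃ f : Ω ≃ Ω,
      ∀ (q : ↥Q) (x : Ω) (s : S),
        f (B.rsmul (B.smul ↑q x) s) = B.rsmul (B.smul ↑(φ q) (f x)) s

/-- The relation on `S × Ω' × S` whose equivalence closure defines the amalgamated product
`S ×_K Ω' ×_K S`: `(sk, x, t) ~ (s, k • x, t)` and `(s, x • k, t) ~ (s, x, kt)` for `k ∈ K`. -/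
def amalgRel {S : Type*} [Group S] (K : Subgroup S) {Ω' : Type*} (B' : Biset ↥K Ω') :
    (S × Ω' × S) → (S × Ω' × S) → Prop := fun a b =>
  (∃ (s t : S) (k : ↥K) (x : Ω'), a = (s * ↑k, x, t) ∧ b = (s, B'.smul k x, t)) ∨
    (∃ (s t : S) (k : ↥K) (x : Ω'), a = (s, B'.rsmul x k, t) ∧ b = (s, x, ↑k * t))

/-!
A strongly closed subgroup `K` is normal in `S`, and every `φ ∈ Hom_F(Q, S)` preserves membership
in `K` in both directions. Hence `|QK| = |φ(Q)K|`, and as `S` is finite there is a bijection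
`ω ↦ ω'` from `Q\S/K` to `φ(Q)\S/K`; fix representatives `c_ω` and `c'_ω`. The map
`l ↦ c'⁻¹ φ(c l c⁻¹) c'` on `K ∩ c⁻¹ Q c` is an `F`-morphism into `K`, so `F|_K`-stability of
`Ω'` provides a bijection `f_ω` of `Ω'` intertwining it with the inclusion. Then
`[q c_ω k, x, t] ↦ [φ(q) c'_ω, f_ω(k x), t]` is a well-defined isomorphism `_QΩ ≅ _φΩ`: the same
construction for `φ⁻¹`, with the maps `f_ω⁻¹`, is its inverse.
-/

namespace FusionSystem

variable {S : Type*} [Group S] (F : FusionSystem S)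

lemma inclusion_mem {P R : Subgroup S} (h : P ≤ R) : Subgroup.inclusion h ∈ F.Hom P R := by
  have hconj : ∀ p ∈ P, 1 * p * 1⁻¹ ∈ R := fun p hp => by simpa using h hp
  convert F.conj_mem 1 P R hconj
  ext; simp [conjMap]

lemma exists_codRestrict {P R T : Subgroup S} {φ : ↥P →* ↥R} (hφ : φ ∈ F.Hom P R)
    (hT : ∀ p, (φ p : S) ∈ T) : ∃ ψ ∈ F.Hom P T, ∀ p, (ψ p : S) = φ p := by
  obtain ⟨φ', hφ', hφ'_apply⟩ := F.restrict_mem hφ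
  have hle : (R.subtype.comp φ).range ≤ T := by
    rintro _ ⟨p, rfl⟩
    exact hT p
  exact ⟨_, F.comp_mem hφ' (F.inclusion_mem hle), hφ'_apply⟩

namespace StronglyClosed

variable {F} {K : Subgroup S}

lemma apply_mem (hK : F.StronglyClosed K) {P R : Subgroup S} {φ : ↥P →* ↥R}
    (hφ : φ ∈ F.Hom P R) {p : ↥P} (hp : (p : S) ∈ K) : (φ p : S) ∈ K :=
  hK (P ⊓ K) inf_le_right _
    (F.comp_mem (F.comp_mem (F.inclusion_mem inf_le_left) hφ) (F.inclusion_mem le_top))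
    ⟨p, p.2, hp⟩

lemma mem_of_apply_mem (hK : F.StronglyClosed K) {P R : Subgroup S} {φ : ↥P →* ↥R}
    (hφ : φ ∈ F.Hom P R) {p : ↥P} (hp : (φ p : S) ∈ K) : (p : S) ∈ K := by
  obtain ⟨ψ, hψ, hψφ⟩ := F.inv_mem hφ
  simpa only [hψφ] using hK.apply_mem hψ (p := ⟨φ p, p, rfl⟩) hp

lemma normal (hK : F.StronglyClosed K) : K.Normal where
  conj_mem k hk g := by
    have hconj : ∀ x ∈ (⊤ : Subgroup S), g * x * g⁻¹ ∈ (⊤ : Subgroup S) := fun _ _ => trivial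
    simpa [conjMap] using hK.apply_mem (F.conj_mem g ⊤ ⊤ hconj) (p := ⟨k, trivial⟩) hk

end StronglyClosed

end FusionSystem

namespace Amalg

variable {S : Type*} [Group S] {K : Subgroup S} {Ω' : Type*} (B' : Biset ↥K Ω')

def Eqv (p p' : S × Ω' × S) : Prop :=
  ∃ k l : ↥K, p'.1 = p.1 * (k : S)⁻¹ ∧ p'.2.1 = B'.rsmul (B'.smul k p.2.1) l ∧
    p'.2.2 = (l : S)⁻¹ * p.2.2

lemma eqv_equivalence : Equivalence (Eqv B') where
  refl _ := ⟨1, 1, by simp, by rw [B'.one_smul, B'.rsmul_one], by simp⟩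
  symm := by
    rintro p p' ⟨k, l, h₁, h₂, h₃⟩
    refine ⟨k⁻¹, l⁻¹, by simp [h₁], ?_, by simp [h₃]⟩
    rw [h₂, ← B'.smul_rsmul, ← B'.mul_smul, inv_mul_cancel, B'.one_smul, ← B'.rsmul_mul,
      mul_inv_cancel, B'.rsmul_one]
  trans := by
    rintro p p' p'' ⟨k, l, h₁, h₂, h₃⟩ ⟨k', l', h₁', h₂', h₃'⟩
    refine ⟨k' * k, l * l', by simp [h₁', h₁, mul_assoc], ?_, by simp [h₃', h₃, mul_assoc]⟩
    rw [h₂', h₂, ← B'.smul_rsmul, ← B'.mul_smul, ← B'.rsmul_mul]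

lemma eqv_of_mk_eq {p p' : S × Ω' × S} (h : Quot.mk (amalgRel K B') p = Quot.mk _ p') :
    Eqv B' p p' := by
  refine (eqv_equivalence B').eqvGen_iff.mp (Relation.EqvGen.mono ?_ _ _ (Quot.eqvGen_exact h))
  rintro _ _ (⟨s, t, k, x, rfl, rfl⟩ | ⟨s, t, k, x, rfl, rfl⟩)
  · exact ⟨k, 1, by simp, by rw [B'.rsmul_one], by simp⟩
  · refine ⟨1, k⁻¹, by simp, ?_, by simp⟩
    rw [B'.one_smul, ← B'.rsmul_mul, mul_inv_cancel, B'.rsmul_one]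

lemma mk_smul (a : S) (k : ↥K) (x : Ω') (t : S) :
    Quot.mk (amalgRel K B') (a, B'.smul k x, t) = Quot.mk _ (a * k, x, t) :=
  (Quot.sound (r := amalgRel K B') (Or.inl ⟨a, t, k, x, rfl, rfl⟩)).symm

lemma mk_rsmul (a : S) (x : Ω') (k : ↥K) (t : S) :
    Quot.mk (amalgRel K B') (a, B'.rsmul x k, t) = Quot.mk _ (a, x, k * t) :=
  Quot.sound (r := amalgRel K B') (Or.inr ⟨a, t, k, x, rfl, rfl⟩)

def biset : Biset S (Quot (amalgRel K B')) where
  smul u z := Quot.map (fun p => (u * p.1, p.2)) (by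
    rintro _ _ (⟨s, t, k, x, rfl, rfl⟩ | ⟨s, t, k, x, rfl, rfl⟩)
    · exact Or.inl ⟨u * s, t, k, x, by simp [mul_assoc], rfl⟩
    · exact Or.inr ⟨u * s, t, k, x, rfl, rfl⟩) z
  rsmul z u := Quot.map (fun p => (p.1, p.2.1, p.2.2 * u)) (by
    rintro _ _ (⟨s, t, k, x, rfl, rfl⟩ | ⟨s, t, k, x, rfl, rfl⟩)
    · exact Or.inl ⟨s, t * u, k, x, rfl, rfl⟩
    · exact Or.inr ⟨s, t * u, k, x, rfl, by simp [mul_assoc]⟩) z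
  one_smul z := by induction z using Quot.ind; simp [Quot.map]
  mul_smul s t z := by induction z using Quot.ind; simp [Quot.map, mul_assoc]
  rsmul_one z := by induction z using Quot.ind; simp [Quot.map]
  rsmul_mul z s t := by induction z using Quot.ind; simp [Quot.map, mul_assoc]
  smul_rsmul s z t := by induction z using Quot.ind; rfl

@[simp] lemma biset_smul_mk (u a : S) (x : Ω') (t : S) :
    (biset B').smul u (Quot.mk _ (a, x, t)) = Quot.mk _ (u * a, x, t) := rfl

@[simp] lemma biset_rsmul_mk (a : S) (x : Ω') (t u : S) :
    (biset B').rsmul (Quot.mk _ (a, x, t)) u = Quot.mk _ (a, x, t * u) := rfl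

lemma biset_leftFree (hfree : ∀ (k : ↥K) (x : Ω'), B'.smul k x = x → k = 1) :
    (biset B').LeftFree := by
  rintro u ⟨a, x, t⟩ hu
  obtain ⟨k, l, ha, hx, ht⟩ := eqv_of_mk_eq B' hu
  obtain rfl : l = 1 := by simpa using ht
  obtain rfl : k = 1 := hfree k x (by simpa [B'.rsmul_one] using hx.symm)
  simpa using ha

end Amalg

namespace DoubleCoset

variable {G : Type*} [Group G]

lemma exists_eq_mul_out_mul (H K : Subgroup G) (a : G) :
    ∃ (ω : Quotient (H : Set G) K) (h : ↥H) (k : ↥K), a = h * ω.out * k := by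
  obtain ⟨h, hh, k, hk, ha⟩ := (DoubleCoset.eq H K (mk H K a).out a).mp (out_eq' H K _)
  exact ⟨_, ⟨h, hh⟩, ⟨k, hk⟩, ha⟩

lemma mk_mul_out_mul {H K : Subgroup G} (ω : Quotient (H : Set G) K) (h : ↥H) (k : ↥K) :
    mk H K (h * ω.out * k) = ω :=
  ((DoubleCoset.eq H K _ _).mpr ⟨h, h.2, k, k.2, rfl⟩).symm.trans (out_eq' H K ω)

def quotientEquivQuotientSup (H N : Subgroup G) [N.Normal] :
    Quotient (H : Set G) N ≃ G ⧸ (H ⊔ N) :=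
  (Quotient.congr (Equiv.refl G) fun a b => by
    rw [rel_iff, Equiv.refl_apply, Equiv.refl_apply, QuotientGroup.rightRel_apply,
      Subgroup.mem_sup_of_normal_right]
    constructor
    · rintro ⟨h, hh, n, hn, rfl⟩
      exact ⟨h, hh, a * n * a⁻¹, Subgroup.Normal.conj_mem ‹_› n hn a, by group⟩
    · rintro ⟨h, hh, n, hn, hb⟩
      refine ⟨h, hh, a⁻¹ * n * a, by simpa using Subgroup.Normal.conj_mem ‹_› n hn a⁻¹, ?_⟩
      rw [show b = h * n * a by rw [hb]; group]
      group).trans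
    (QuotientGroup.quotientRightRelEquivQuotientLeftRel (H ⊔ N))

end DoubleCoset

lemma Subgroup.index_sup_eq_of_relIndex_eq {G : Type*} [Group G] [Finite G] {N H H' : Subgroup G}
    [N.Normal] (h : N.relIndex H = N.relIndex H') : (H ⊔ N).index = (H' ⊔ N).index := by
  have hH := N.relIndex_mul_index (le_sup_right : N ≤ H ⊔ N)
  have hH' := N.relIndex_mul_index (le_sup_right : N ≤ H' ⊔ N)
  rw [Subgroup.relIndex_sup_right] at hH hH'
  rw [h, ← hH'] at hH
  exact Nat.eq_of_mul_eq_mul_left (Nat.pos_of_ne_zero Subgroup.index_ne_zero_of_finite) hH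

namespace Biset

variable {S : Type*} [Group S] {K : Subgroup S} {Ω' : Type*}

def LeftFStableRestrict (B' : Biset ↥K Ω') (F : FusionSystem S) : Prop :=
  ∀ (Q : Subgroup S) (hQ : Q ≤ K), ∀ φ ∈ F.Hom Q K, ∃ f : Ω' ≃ Ω',
    ∀ (q : ↥Q) (x : Ω') (k : ↥K),
      f (B'.rsmul (B'.smul ⟨↑q, hQ q.2⟩ x) k) = B'.rsmul (B'.smul (φ q) (f x)) k

/-- `f` is an isomorphism of bisets `_L Ω' ≅ _μ Ω'`, where `L = K ∩ c⁻¹ Q₁ c` and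
`μ l = c'⁻¹ θ(c l c⁻¹) c'`. -/
structure TwistedEquivariant (B' : Biset ↥K Ω') {Q₁ Q₂ : Subgroup S} (θ : ↥Q₁ →* ↥Q₂)
    (c c' : S) (f : Ω' → Ω') : Prop where
  map_rsmul : ∀ y k, f (B'.rsmul y k) = B'.rsmul (f y) k
  map_smul : ∀ (q : ↥Q₁) (l l' : ↥K), c * l = q * c → c' * l' = θ q * c' →
    ∀ x, f (B'.smul l x) = B'.smul l' (f x)

lemma TwistedEquivariant.symm {B' : Biset ↥K Ω'} {Q₁ Q₂ : Subgroup S} {θ : ↥Q₁ ≃* ↥Q₂}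
    {c c' : S} {f : Ω' ≃ Ω'} (hf : TwistedEquivariant B' (θ : ↥Q₁ →* ↥Q₂) c c' f) :
    TwistedEquivariant B' (θ.symm : ↥Q₂ →* ↥Q₁) c' c f.symm where
  map_rsmul y k := by
    rw [f.symm_apply_eq, hf.map_rsmul, f.apply_symm_apply]
  map_smul q l l' hl hl' x := by
    rw [f.symm_apply_eq, hf.map_smul (θ.symm q) l' l hl' (by simpa using hl), f.apply_symm_apply]

lemma exists_twistedEquivariant {F : FusionSystem S} (hK : F.StronglyClosed K)
    {B' : Biset ↥K Ω'} (hB' : B'.LeftFStableRestrict F) {Q R : Subgroup S} {φ : ↥Q →* ↥R}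
    (hφ : φ ∈ F.Hom Q R) (c c' : S) : ∃ f : Ω' ≃ Ω', TwistedEquivariant B' φ c c' f := by
  set L : Subgroup S := K ⊓ Q.comap (MulAut.conj c).toMonoidHom
  have hcL : ∀ l ∈ L, c * l * c⁻¹ ∈ Q := fun l hl => by simpa using hl.2
  have hc' : ∀ r ∈ R, c'⁻¹ * r * c'⁻¹⁻¹ ∈ (⊤ : Subgroup S) := fun _ _ => trivial
  set χ := (conjMap c'⁻¹ R ⊤ hc').comp (φ.comp (conjMap c L Q hcL))
  have hχ : χ ∈ F.Hom L ⊤ :=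
    F.comp_mem (F.comp_mem (F.conj_mem _ _ _ _) hφ) (F.conj_mem _ _ _ _)
  obtain ⟨μ, hμ, hμχ⟩ := F.exists_codRestrict hχ (hK L inf_le_left χ hχ)
  obtain ⟨f, hf⟩ := hB' L inf_le_left μ hμ
  refine ⟨f, fun y k => ?_, fun q l l' hl hl' x => ?_⟩
  · have h1 := hf 1 y k
    rwa [show (⟨((1 : ↥L) : S), _⟩ : ↥K) = 1 from rfl, map_one, B'.one_smul, B'.one_smul] at h1
  have hlL : (l : S) ∈ L := ⟨l.2, by simp [hl]⟩
  have hμl : μ ⟨l, hlL⟩ = l' := by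
    have hq : (⟨c * l * c⁻¹, hcL l hlL⟩ : ↥Q) = q := Subtype.ext (by simp [hl])
    ext
    simp only [hμχ, χ, conjMap, MonoidHom.comp_apply, MonoidHom.coe_mk, OneHom.coe_mk, hq,
      inv_inv]
    rw [mul_assoc, ← hl', inv_mul_cancel_left]
  simpa [B'.rsmul_one, hμl] using hf ⟨l, hlL⟩ x 1

end Biset

namespace Amalg

variable {S : Type*} [Group S] {F : FusionSystem S} {K : Subgroup S} {Ω' : Type*}
  {B' : Biset ↥K Ω'} {Q₁ Q₂ : Subgroup S}

lemma exists_eq_mk_mul_out_mul (Q : Subgroup S) (z : Quot (amalgRel K B')) :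
    ∃ (ω : DoubleCoset.Quotient (Q : Set S) K) (q : ↥Q) (k : ↥K) (x : Ω') (t : S),
      z = Quot.mk _ (q * ω.out * k, x, t) := by
  obtain ⟨⟨a, x, t⟩⟩ := z
  obtain ⟨ω, q, k, rfl⟩ := DoubleCoset.exists_eq_mul_out_mul Q K a
  exact ⟨ω, q, k, x, t, rfl⟩

variable (B') in
def IsTwistMap (θ : ↥Q₁ →* ↥Q₂)
    (j : DoubleCoset.Quotient (Q₁ : Set S) K → DoubleCoset.Quotient (Q₂ : Set S) K)
    (f : DoubleCoset.Quotient (Q₁ : Set S) K → Ω' → Ω')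
    (N : Quot (amalgRel K B') → Quot (amalgRel K B')) : Prop :=
  ∀ ω (q : ↥Q₁) (k : ↥K) x t,
    N (Quot.mk _ (q * ω.out * k, x, t)) = Quot.mk _ (θ q * (j ω).out, f ω (B'.smul k x), t)

section Construction

variable [K.Normal] {θ : ↥Q₁ →* ↥Q₂}
  {j : DoubleCoset.Quotient (Q₁ : Set S) K → DoubleCoset.Quotient (Q₂ : Set S) K}
  {f : DoubleCoset.Quotient (Q₁ : Set S) K → Ω' → Ω'}

lemma mk_twist_eq (hθ : ∀ q : ↥Q₁, (q : S) ∈ K → (θ q : S) ∈ K)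
    (hf : ∀ ω, B'.TwistedEquivariant θ ω.out (j ω).out (f ω)) {ω} {q₁ q₂ : ↥Q₁}
    {k₁ k₂ : ↥K} (h : (q₁ : S) * ω.out * k₁ = q₂ * ω.out * k₂) (x : Ω') (t : S) :
    Quot.mk (amalgRel K B') (θ q₁ * (j ω).out, f ω (B'.smul k₁ x), t) =
      Quot.mk _ (θ q₂ * (j ω).out, f ω (B'.smul k₂ x), t) := by
  set c := ω.out
  set c' := (j ω).out
  have hl : c * ↑(k₁ * k₂⁻¹) = ↑(q₁⁻¹ * q₂) * c := by
    calc c * ↑(k₁ * k₂⁻¹) = (q₁ : S)⁻¹ * (q₁ * c * k₁) * (k₂ : S)⁻¹ := by push_cast; group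
      _ = ↑(q₁⁻¹ * q₂) * c := by rw [h]; push_cast; group
  have hqK : ((q₁⁻¹ * q₂ : ↥Q₁) : S) ∈ K := by
    rw [show ((q₁⁻¹ * q₂ : ↥Q₁) : S) = c * ↑(k₁ * k₂⁻¹) * c⁻¹ by rw [hl]; group]
    exact ‹K.Normal›.conj_mem _ (k₁ * k₂⁻¹).2 c
  set l' : ↥K := ⟨c'⁻¹ * θ (q₁⁻¹ * q₂) * c', by
    simpa using ‹K.Normal›.conj_mem _ (hθ _ hqK) c'⁻¹⟩
  have hl' : c' * l' = θ (q₁⁻¹ * q₂) * c' := by simp [l', mul_assoc]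
  calc Quot.mk (amalgRel K B') (θ q₁ * c', f ω (B'.smul k₁ x), t)
      = Quot.mk _ (θ q₁ * c', f ω (B'.smul (k₁ * k₂⁻¹) (B'.smul k₂ x)), t) := by
        rw [← B'.mul_smul, inv_mul_cancel_right]
    _ = Quot.mk _ (θ q₁ * c' * l', f ω (B'.smul k₂ x), t) := by
        rw [(hf ω).map_smul _ _ _ hl hl', mk_smul]
    _ = Quot.mk _ (θ q₂ * c', f ω (B'.smul k₂ x), t) := by
        rw [mul_assoc, hl', ← mul_assoc, ← Subgroup.coe_mul, ← map_mul, mul_inv_cancel_left]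

lemma exists_isTwistMap (hθ : ∀ q : ↥Q₁, (q : S) ∈ K → (θ q : S) ∈ K)
    (hf : ∀ ω, B'.TwistedEquivariant θ ω.out (j ω).out (f ω)) :
    ∃ N, IsTwistMap B' θ j f N := by
  choose ω q k hqk using DoubleCoset.exists_eq_mul_out_mul Q₁ K
  set N₀ : S × Ω' × S → Quot (amalgRel K B') := fun p =>
    Quot.mk _ (θ (q p.1) * (j (ω p.1)).out, f (ω p.1) (B'.smul (k p.1) p.2.1), p.2.2)
  have hN₀ : ∀ ω' (q' : ↥Q₁) (k' : ↥K) x t,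
      N₀ (q' * ω'.out * k', x, t) = Quot.mk _ (θ q' * (j ω').out, f ω' (B'.smul k' x), t) := by
    intro ω' q' k' x t
    generalize ha : (q' : S) * ω'.out * k' = a
    have hdec := (hqk a).symm.trans ha.symm
    obtain rfl : ω a = ω' := by
      simpa only [DoubleCoset.mk_mul_out_mul] using congrArg (DoubleCoset.mk Q₁ K) hdec
    exact mk_twist_eq hθ hf hdec x t
  refine ⟨Quot.lift N₀ ?_, hN₀⟩
  rintro _ _ (⟨s, t, k₀, x, rfl, rfl⟩ | ⟨s, t, k₀, x, rfl, rfl⟩)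
  all_goals obtain ⟨ω', q', k', rfl⟩ := DoubleCoset.exists_eq_mul_out_mul Q₁ K s
  · rw [mul_assoc _ (k' : S), ← Subgroup.coe_mul, hN₀, hN₀, B'.mul_smul]
  · rw [hN₀, hN₀, ← B'.smul_rsmul, (hf ω').map_rsmul, mk_rsmul]

end Construction

lemma IsTwistMap.leftInverse {θ : ↥Q₁ →* ↥Q₂} {θ' : ↥Q₂ →* ↥Q₁}
    {j : DoubleCoset.Quotient (Q₁ : Set S) K → DoubleCoset.Quotient (Q₂ : Set S) K}
    {j' : DoubleCoset.Quotient (Q₂ : Set S) K → DoubleCoset.Quotient (Q₁ : Set S) K}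
    {f : DoubleCoset.Quotient (Q₁ : Set S) K → Ω' → Ω'}
    {f' : DoubleCoset.Quotient (Q₂ : Set S) K → Ω' → Ω'} {N N' : Quot (amalgRel K B') → _}
    (hN : IsTwistMap B' θ j f N) (hN' : IsTwistMap B' θ' j' f' N')
    (hθ : ∀ q, θ' (θ q) = q) (hj : ∀ ω, j' (j ω) = ω) (hf : ∀ ω x, f' (j ω) (f ω x) = x) :
    Function.LeftInverse N' N := by
  intro z
  obtain ⟨ω, q, k, x, t, rfl⟩ := exists_eq_mk_mul_out_mul Q₁ z
  calc N' (N (Quot.mk _ (q * ω.out * k, x, t)))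
      = N' (Quot.mk _ (θ q * (j ω).out * (1 : ↥K), f ω (B'.smul k x), t)) := by
        rw [hN, OneMemClass.coe_one, mul_one]
    _ = Quot.mk _ (q * ω.out, B'.smul k x, t) := by
        rw [hN', hθ, hj, B'.one_smul, hf]
    _ = Quot.mk _ (q * ω.out * k, x, t) := mk_smul B' _ _ _ _

lemma IsTwistMap.map_smul_rsmul {θ : ↥Q₁ →* ↥Q₂}
    {j : DoubleCoset.Quotient (Q₁ : Set S) K → DoubleCoset.Quotient (Q₂ : Set S) K}
    {f : DoubleCoset.Quotient (Q₁ : Set S) K → Ω' → Ω'} {N : Quot (amalgRel K B') → _}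
    (hN : IsTwistMap B' θ j f N) (q : ↥Q₁) (z : Quot (amalgRel K B')) (s : S) :
    N ((biset B').rsmul ((biset B').smul q z) s) =
      (biset B').rsmul ((biset B').smul (θ q) (N z)) s := by
  obtain ⟨ω, q', k, x, t, rfl⟩ := exists_eq_mk_mul_out_mul Q₁ z
  simp only [biset_smul_mk, biset_rsmul_mk]
  rw [← mul_assoc, ← mul_assoc, ← Subgroup.coe_mul, hN, hN]
  simp only [biset_smul_mk, biset_rsmul_mk, map_mul, Subgroup.coe_mul, mul_assoc]

lemma nonempty_doubleCoset_equiv [Finite S] (hK : F.StronglyClosed K) {Q R : Subgroup S}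
    {φ : ↥Q →* ↥R} (hφ : φ ∈ F.Hom Q R) :
    Nonempty (DoubleCoset.Quotient (Q : Set S) K ≃
      DoubleCoset.Quotient ((R.subtype.comp φ).range : Set S) K) := by
  have := hK.normal
  have hcomap : K.comap Q.subtype = K.comap (R.subtype.comp φ) := by
    ext q
    exact ⟨hK.apply_mem hφ, hK.mem_of_apply_mem hφ⟩
  have hindex : (Q ⊔ K).index = ((R.subtype.comp φ).range ⊔ K).index := by
    refine Subgroup.index_sup_eq_of_relIndex_eq ?_
    calc K.relIndex Q = (K.comap Q.subtype).index := by rw [Subgroup.index_comap, Q.range_subtype]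
      _ = K.relIndex (R.subtype.comp φ).range := by rw [hcomap, Subgroup.index_comap]
  obtain ⟨e⟩ := Finite.card_eq.mp hindex
  exact ⟨(DoubleCoset.quotientEquivQuotientSup _ _).trans
    (e.trans (DoubleCoset.quotientEquivQuotientSup _ _).symm)⟩

lemma exists_equiv_map_smul_rsmul [Finite S] (hK : F.StronglyClosed K)
    (hB' : B'.LeftFStableRestrict F) {Q R : Subgroup S} {φ : ↥Q →* ↥R} (hφ : φ ∈ F.Hom Q R) :
    ∃ e : Quot (amalgRel K B') ≃ Quot (amalgRel K B'), ∀ (q : ↥Q) z s,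
      e ((biset B').rsmul ((biset B').smul q z) s) =
        (biset B').rsmul ((biset B').smul (φ q) (e z)) s := by
  have := hK.normal
  obtain ⟨φ₀, hφ₀, hφ₀_apply⟩ := F.restrict_mem hφ
  let θ : ↥Q ≃* ↥(R.subtype.comp φ).range := MulEquiv.ofBijective φ₀
    ⟨F.injective hφ₀, by rintro ⟨_, q, rfl⟩; exact ⟨q, Subtype.ext (hφ₀_apply q)⟩⟩
  have hθ : (θ : ↥Q →* ↥(R.subtype.comp φ).range) ∈ F.Hom Q _ := hφ₀
  have hθK (q : ↥Q) : (q : S) ∈ K ↔ (θ q : S) ∈ K :=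
    ⟨hK.apply_mem hθ, hK.mem_of_apply_mem hθ⟩
  obtain ⟨j⟩ := nonempty_doubleCoset_equiv hK hφ
  choose f hf using fun ω => Biset.exists_twistedEquivariant hK hB' hθ ω.out (j ω).out
  obtain ⟨N, hN⟩ := exists_isTwistMap (θ := (θ : ↥Q →* _)) (j := j) (f := fun ω => f ω)
    (fun q => (hθK q).1) hf
  obtain ⟨N', hN'⟩ := exists_isTwistMap (B' := B') (θ := θ.symm) (j := j.symm)
    (f := fun ω => (f (j.symm ω)).symm) (fun q hq => (hθK _).2 (by simpa using hq))
    (fun ω => by simpa only [j.apply_symm_apply] using (hf (j.symm ω)).symm)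
  refine ⟨⟨N, N', hN.leftInverse hN' θ.symm_apply_apply j.symm_apply_apply fun ω x => ?_,
    hN'.leftInverse hN θ.apply_symm_apply j.apply_symm_apply fun ω x => ?_⟩, fun q z s => ?_⟩
  · rw [j.symm_apply_apply, Equiv.symm_apply_apply]
  · exact Equiv.apply_symm_apply _ x
  exact (hN.map_smul_rsmul q z s).trans (by rw [← hφ₀_apply]; rfl)

lemma biset_leftFStable [Finite S] (hK : F.StronglyClosed K)
    (hfree : ∀ (k : ↥K) (x : Ω'), B'.smul k x = x → k = 1) (hB' : B'.LeftFStableRestrict F) :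
    (biset B').LeftFStable F :=
  ⟨biset_leftFree B' hfree, fun _ _ hφ => exists_equiv_map_smul_rsmul hK hB' hφ⟩

end Amalg

/-- Let `F` be a fusion system on a finite group `S`, `K` a strongly `F`-closed subgroup of
`S`, and `Ω'` a left `F|_K`-stable `K`-`K`-biset. Then the `S`-`S`-biset
`Ω = S ×_K Ω' ×_K S` (with the canonical actions) is left `F`-stable. -/
theorem amalg_leftFStable {S : Type*} [Group S] [Finite S]
    (F : FusionSystem S) (K : Subgroup S) (hK : F.StronglyClosed K)
    {Ω' : Type*} (B' : Biset ↥K Ω')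
    (hfree' : ∀ (k : ↥K) (x : Ω'), B'.smul k x = x → k = 1)
    (hstable' : ∀ (Q : Subgroup S) (hQ : Q ≤ K), ∀ φ ∈ F.Hom Q K, ∃ f : Ω' ≃ Ω',
      ∀ (q : ↥Q) (x : Ω') (k : ↥K),
        f (B'.rsmul (B'.smul ⟨↑q, hQ q.2⟩ x) k) = B'.rsmul (B'.smul (φ q) (f x)) k) :
    ∃ B : Biset S (Quot (amalgRel K B')),
      (∀ (u a t : S) (x : Ω'),
          B.smul u (Quot.mk _ (a, x, t)) = Quot.mk _ (u * a, x, t)) ∧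
        (∀ (a t u : S) (x : Ω'),
          B.rsmul (Quot.mk _ (a, x, t)) u = Quot.mk _ (a, x, t * u)) ∧
        B.LeftFStable F :=
  ⟨Amalg.biset B', fun _ _ _ _ => rfl, fun _ _ _ _ => rfl,
    Amalg.biset_leftFStable hK hfree' hstable'⟩
end

section
/- Let F be a fusion system on a finite group S, let K be a strongly F-closed subgroup of S, let Ω' be a left F|_K-stable K-K-biset which is bifree as a K-K-biset, and let Ω = S ×_K Ω' ×_K S. Then for every ω ∈ Ω and all s, t ∈ S with s·ω = ω·t, both s and t lie in K; moreover there exist a, b ∈ S and ω₀ ∈ Ω' such that ω is the class of (a, ω₀, b) and the elements k₁ := a⁻¹sa and k₂ := b t b⁻¹ lie in K and satisfy k₁·ω₀ = ω₀·k₂ in Ω'. -/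
/-!
Two representatives of the same point of `S ×_K Ω' ×_K S` differ by the action of a pair
`(k₁, k₂) ∈ K × K`, `(a, x, b) ↦ (a k₁⁻¹, k₁ x k₂, k₂⁻¹ b)`, since these orbits are unions of
classes of the generating relation. So `s • [a, x, b] = [a, x, b] • t` yields `k₁, k₂ ∈ K` with
`a k₁ = s a`, `k₂⁻¹ b = b t` and `x = k₁ x k₂`, i.e. `a⁻¹ s a = k₁ ∈ K`, `b t b⁻¹ = k₂⁻¹ ∈ K`
and `k₁ x = x k₂⁻¹`. Strong closure makes `K` normal in `S`, which gives `s, t ∈ K`.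
-/

namespace FusionSystem

lemma StronglyClosed.conj_mem {S : Type*} [Group S] {F : FusionSystem S} {K : Subgroup S}
    (hK : F.StronglyClosed K) (g : S) {x : S} (hx : x ∈ K) : g * x * g⁻¹ ∈ K :=
  hK K le_rfl _ (F.conj_mem g K ⊤ fun _ _ => trivial) ⟨x, hx⟩

end FusionSystem

section Amalgamation

variable {S : Type*} [Group S] (K : Subgroup S) {Ω' : Type*} (B' : Biset ↥K Ω')

def AmalgOrbitRel (p q : S × Ω' × S) : Prop :=
  ∃ k₁ k₂ : ↥K, q.1 = p.1 * (↑k₁)⁻¹ ∧ q.2.1 = B'.rsmul (B'.smul k₁ p.2.1) k₂ ∧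
    q.2.2 = (↑k₂)⁻¹ * p.2.2

variable {K B'}

lemma AmalgOrbitRel.refl (p : S × Ω' × S) : AmalgOrbitRel K B' p p :=
  ⟨1, 1, by simp, by simp [B'.one_smul, B'.rsmul_one], by simp⟩

lemma AmalgOrbitRel.symm {p q : S × Ω' × S} (h : AmalgOrbitRel K B' p q) :
    AmalgOrbitRel K B' q p := by
  obtain ⟨k₁, k₂, h₁, h₂, h₃⟩ := h
  refine ⟨k₁⁻¹, k₂⁻¹, by simp [h₁, mul_assoc], ?_, by simp [h₃, ← mul_assoc]⟩
  rw [h₂, ← B'.smul_rsmul, ← B'.mul_smul, inv_mul_cancel, B'.one_smul, ← B'.rsmul_mul,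
    mul_inv_cancel, B'.rsmul_one]

lemma AmalgOrbitRel.trans {p q r : S × Ω' × S} (h : AmalgOrbitRel K B' p q)
    (h' : AmalgOrbitRel K B' q r) : AmalgOrbitRel K B' p r := by
  obtain ⟨k₁, k₂, h₁, h₂, h₃⟩ := h
  obtain ⟨l₁, l₂, g₁, g₂, g₃⟩ := h'
  refine ⟨l₁ * k₁, k₂ * l₂, by simp [g₁, h₁, mul_assoc], ?_, by simp [g₃, h₃, mul_assoc]⟩
  rw [g₂, h₂, B'.mul_smul, B'.rsmul_mul, ← B'.smul_rsmul]

lemma AmalgOrbitRel.of_amalgRel {p q : S × Ω' × S} (h : amalgRel K B' p q) :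
    AmalgOrbitRel K B' p q := by
  rcases h with ⟨s, t, k, x, rfl, rfl⟩ | ⟨s, t, k, x, rfl, rfl⟩
  · exact ⟨k, 1, by simp [mul_assoc], by simp [B'.rsmul_one], by simp⟩
  · refine ⟨1, k⁻¹, by simp, ?_, by simp⟩
    rw [B'.one_smul, ← B'.rsmul_mul, mul_inv_cancel, B'.rsmul_one]

lemma AmalgOrbitRel.equivalence : Equivalence (AmalgOrbitRel K B') :=
  ⟨.refl, .symm, .trans⟩

lemma AmalgOrbitRel.of_mk_eq {p q : S × Ω' × S}
    (h : Quot.mk (amalgRel K B') p = Quot.mk (amalgRel K B') q) : AmalgOrbitRel K B' p q :=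
  AmalgOrbitRel.equivalence.eqvGen_iff.mp <|
    Relation.EqvGen.mono (fun _ _ => .of_amalgRel) _ _ (Quot.eqvGen_exact h)

variable (K B')

def amalgBiset : Biset S (Quot (amalgRel K B')) where
  smul u := Quot.map (fun p => (u * p.1, p.2)) (by
    rintro p q (⟨s, t, k, x, rfl, rfl⟩ | ⟨s, t, k, x, rfl, rfl⟩)
    · exact Or.inl ⟨u * s, t, k, x, by simp [mul_assoc], rfl⟩
    · exact Or.inr ⟨u * s, t, k, x, rfl, rfl⟩)
  rsmul ω u := Quot.map (fun p => (p.1, p.2.1, p.2.2 * u)) (by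
    rintro p q (⟨s, t, k, x, rfl, rfl⟩ | ⟨s, t, k, x, rfl, rfl⟩)
    · exact Or.inl ⟨s, t * u, k, x, rfl, rfl⟩
    · exact Or.inr ⟨s, t * u, k, x, rfl, by simp [mul_assoc]⟩) ω
  one_smul := by
    rintro ⟨a, x, t⟩
    exact congrArg (fun c => Quot.mk _ (c, x, t)) (one_mul a)
  mul_smul := by
    rintro s u ⟨a, x, t⟩
    exact congrArg (fun c => Quot.mk _ (c, x, t)) (mul_assoc s u a)
  rsmul_one := by
    rintro ⟨a, x, t⟩
    exact congrArg (fun c => Quot.mk _ (a, x, c)) (mul_one t)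
  rsmul_mul := by
    rintro ⟨a, x, t⟩ s u
    exact congrArg (fun c => Quot.mk _ (a, x, c)) (mul_assoc t s u).symm
  smul_rsmul := by rintro s ⟨a, x, t⟩ u; rfl

variable {K B'}

lemma exists_conj_smul_eq_rsmul_conj_of_mk_eq {s t a b : S} {x : Ω'}
    (h : Quot.mk (amalgRel K B') (s * a, x, b) = Quot.mk (amalgRel K B') (a, x, b * t)) :
    ∃ (h₁ : a⁻¹ * s * a ∈ K) (h₂ : b * t * b⁻¹ ∈ K),
      B'.smul ⟨a⁻¹ * s * a, h₁⟩ x = B'.rsmul x ⟨b * t * b⁻¹, h₂⟩ := by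
  obtain ⟨k₁, k₂, ha, hx, hb⟩ := AmalgOrbitRel.of_mk_eq h
  dsimp only at ha hx hb
  have hk₁ : a⁻¹ * s * a = k₁ := by
    rw [mul_assoc, ← eq_mul_inv_iff_mul_eq.mp ha, inv_mul_cancel_left]
  have hk₂ : b * t * b⁻¹ = (k₂⁻¹ : ↥K) := by
    rw [Subgroup.coe_inv, hb, mul_inv_cancel_right]
  have h₁ : a⁻¹ * s * a ∈ K := hk₁ ▸ k₁.2
  have h₂ : b * t * b⁻¹ ∈ K := hk₂ ▸ (k₂⁻¹).2
  refine ⟨h₁, h₂, ?_⟩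
  rw [show (⟨_, h₁⟩ : ↥K) = k₁ from Subtype.ext hk₁,
    show (⟨_, h₂⟩ : ↥K) = k₂⁻¹ from Subtype.ext hk₂]
  conv_rhs => rw [hx]
  rw [← B'.rsmul_mul, mul_inv_cancel, B'.rsmul_one]

end Amalgamation

theorem amalg_isotropy_general {S : Type*} [Group S]
    (F : FusionSystem S) (K : Subgroup S) (hK : F.StronglyClosed K)
    {Ω' : Type*} (B' : Biset ↥K Ω') :
    ∃ B : Biset S (Quot (amalgRel K B')),
      (∀ (u a t : S) (x : Ω'),
          B.smul u (Quot.mk _ (a, x, t)) = Quot.mk _ (u * a, x, t)) ∧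
        (∀ (a t u : S) (x : Ω'),
          B.rsmul (Quot.mk _ (a, x, t)) u = Quot.mk _ (a, x, t * u)) ∧
        ∀ (ω : Quot (amalgRel K B')) (s t : S), B.smul s ω = B.rsmul ω t →
          s ∈ K ∧ t ∈ K ∧
            ∃ (a b : S) (ω₀ : Ω'), ω = Quot.mk _ (a, ω₀, b) ∧
              ∃ (h₁ : a⁻¹ * s * a ∈ K) (h₂ : b * t * b⁻¹ ∈ K),
                B'.smul ⟨a⁻¹ * s * a, h₁⟩ ω₀ = B'.rsmul ω₀ ⟨b * t * b⁻¹, h₂⟩ := by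
  refine ⟨amalgBiset K B', fun _ _ _ _ => rfl, fun _ _ _ _ => rfl, ?_⟩
  rintro ⟨a, x, b⟩ s t h
  obtain ⟨h₁, h₂, hx⟩ := exists_conj_smul_eq_rsmul_conj_of_mk_eq h
  have hs : s ∈ K := by simpa [mul_assoc] using hK.conj_mem a h₁
  have ht : t ∈ K := by simpa [mul_assoc] using hK.conj_mem b⁻¹ h₂
  exact ⟨hs, ht, a, b, x, rfl, h₁, h₂, hx⟩

/-- Let `F` be a fusion system on a finite group `S`, `K` a strongly `F`-closed subgroup of
`S`, `Ω'` a bifree left `F|_K`-stable `K`-`K`-biset and `Ω = S ×_K Ω' ×_K S`. Then for every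
`ω ∈ Ω` and `s, t ∈ S` with `s • ω = ω • t` one has `s ∈ K` and `t ∈ K`; moreover there are
`a, b ∈ S` and `ω₀ ∈ Ω'` with `ω = [(a, ω₀, b)]` such that `k₁ = a⁻¹sa` and `k₂ = btb⁻¹`
lie in `K` and satisfy `k₁ • ω₀ = ω₀ • k₂` in `Ω'`. -/
theorem amalg_isotropy {S : Type*} [Group S] [Finite S]
    (F : FusionSystem S) (K : Subgroup S) (hK : F.StronglyClosed K)
    {Ω' : Type*} (B' : Biset ↥K Ω')
    (hfree' : ∀ (k : ↥K) (x : Ω'), B'.smul k x = x → k = 1)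
    (hrfree' : ∀ (x : Ω') (k : ↥K), B'.rsmul x k = x → k = 1)
    (hstable' : ∀ (Q : Subgroup S) (hQ : Q ≤ K), ∀ φ ∈ F.Hom Q K, ∃ f : Ω' ≃ Ω',
      ∀ (q : ↥Q) (x : Ω') (k : ↥K),
        f (B'.rsmul (B'.smul ⟨↑q, hQ q.2⟩ x) k) = B'.rsmul (B'.smul (φ q) (f x)) k) :
    ∃ B : Biset S (Quot (amalgRel K B')),
      (∀ (u a t : S) (x : Ω'),
          B.smul u (Quot.mk _ (a, x, t)) = Quot.mk _ (u * a, x, t)) ∧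
        (∀ (a t u : S) (x : Ω'),
          B.rsmul (Quot.mk _ (a, x, t)) u = Quot.mk _ (a, x, t * u)) ∧
        ∀ (ω : Quot (amalgRel K B')) (s t : S), B.smul s ω = B.rsmul ω t →
          s ∈ K ∧ t ∈ K ∧
            ∃ (a b : S) (ω₀ : Ω'), ω = Quot.mk _ (a, ω₀, b) ∧
              ∃ (h₁ : a⁻¹ * s * a ∈ K) (h₂ : b * t * b⁻¹ ∈ K),
                B'.smul ⟨a⁻¹ * s * a, h₁⟩ ω₀ = B'.rsmul ω₀ ⟨b * t * b⁻¹, h₂⟩ :=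
  amalg_isotropy_general F K hK B'
end

section
/- Let K be a finite abelian group whose exponent is squarefree, let L be a subgroup of K and let φ: L → K be an injective group homomorphism. Then there exists an automorphism ψ of K such that ψ(l) = φ(l) for all l ∈ L. -/
/-!
Viewed additively, `K` is killed by the squarefree `n = exp K`, so it is a module over the
semisimple ring `ZMod n`, hence a semisimple `ℤ`-module. Extend `φ` one simple summand at a
time: if `p ≠ ⊤`, pick a simple `S` inside a complement `q` of `p`, and a complement `C` of
`φ p`. From `Hom(S, p) × Hom(S, q) ≃ Hom(S, K) ≃ Hom(S, φ p) × Hom(S, C)` and finiteness,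
`Hom(S, C)` is as large as `Hom(S, q)`, so nonzero; a nonzero map out of the simple `S` is
injective, and `φ` extends injectively to `p ⊔ S`. Once `p = ⊤`, finiteness turns the
injective extension into an automorphism.
-/

open Function Submodule

section Ring

variable {R M : Type*} [Ring R] [AddCommGroup M] [Module R M]

instance LinearMap.finite {N : Type*} [AddCommGroup N] [Module R N] [Finite M] [Finite N] :
    Finite (M →ₗ[R] N) :=
  Finite.of_injective _ DFunLike.coe_injective

theorem Submodule.card_linearMap_eq_mul_of_isCompl (X : Type*) [AddCommGroup X] [Module R X]
    {A B : Submodule R M} (h : IsCompl A B) :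
    Nat.card (X →ₗ[R] M) = Nat.card (X →ₗ[R] A) * Nat.card (X →ₗ[R] B) := by
  rw [← Nat.card_prod]
  exact Nat.card_congr ((LinearMap.prodEquiv (S := ℕ)).toEquiv.trans
    (LinearEquiv.arrowCongrAddEquiv (LinearEquiv.refl R X) (prodEquivOfIsCompl A B h)).toEquiv).symm

theorem Submodule.card_linearMap_eq_of_isCompl_of_linearEquiv (X : Type*) [AddCommGroup X]
    [Module R X] [Finite X] [Finite M] {A B A' B' : Submodule R M} (h : IsCompl A B)
    (h' : IsCompl A' B') (e : A ≃ₗ[R] A') :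
    Nat.card (X →ₗ[R] B) = Nat.card (X →ₗ[R] B') := by
  have hA : Nat.card (X →ₗ[R] A) = Nat.card (X →ₗ[R] A') :=
    Nat.card_congr (LinearEquiv.arrowCongrAddEquiv (LinearEquiv.refl R X) e).toEquiv
  have hsplit := (card_linearMap_eq_mul_of_isCompl X h).symm.trans
    (card_linearMap_eq_mul_of_isCompl X h')
  rw [hA] at hsplit
  exact Nat.eq_of_mul_eq_mul_left Nat.card_pos hsplit

theorem LinearMap.injective_coprod_of_disjoint_range {M₁ M₂ N : Type*} [AddCommGroup M₁]
    [Module R M₁] [AddCommGroup M₂] [Module R M₂] [AddCommGroup N] [Module R N]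
    {f : M₁ →ₗ[R] N} {g : M₂ →ₗ[R] N} (hf : Injective f) (hg : Injective g)
    (hfg : Disjoint (range f) (range g)) : Injective (f.coprod g) := by
  rw [← ker_eq_bot, ker_coprod_of_disjoint_range _ _ hfg, ker_eq_bot.2 hf, ker_eq_bot.2 hg,
    Submodule.prod_bot]

theorem Submodule.exists_injective_extend_sup {N : Type*} [AddCommGroup N] [Module R N]
    {p q : Submodule R M} (hpq : Disjoint p q) {f : p →ₗ[R] N} {g : q →ₗ[R] N}
    (hf : Injective f) (hg : Injective g)
    (hfg : Disjoint (LinearMap.range f) (LinearMap.range g)) :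
    ∃ h : ↥(p ⊔ q) →ₗ[R] N, Injective h ∧ ∀ x : p, h (inclusion le_sup_left x) = f x := by
  have hpq' : Disjoint (LinearMap.range p.subtype) (LinearMap.range q.subtype) := by
    simpa only [range_subtype] using hpq
  let e : (p × q) ≃ₗ[R] ↥(p ⊔ q) :=
    LinearEquiv.ofInjective _ (LinearMap.injective_coprod_of_disjoint_range
      p.injective_subtype q.injective_subtype hpq') ≪≫ₗ
    LinearEquiv.ofEq _ _ (by rw [LinearMap.range_coprod, range_subtype, range_subtype])
  refine ⟨f.coprod g ∘ₗ e.symm.toLinearMap,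
    (LinearMap.injective_coprod_of_disjoint_range hf hg hfg).comp e.symm.injective, fun x => ?_⟩
  have : e.symm (inclusion le_sup_left x) = (x, 0) := by
    rw [LinearEquiv.symm_apply_eq]; ext; simp [e]
  simp [this]

variable [IsSemisimpleModule R M] [Finite M]

theorem Submodule.exists_injective_extend_of_ne_top {p : Submodule R M} (hp : p ≠ ⊤)
    {φ : p →ₗ[R] M} (hφ : Injective φ) :
    ∃ (p' : Submodule R M) (hpp' : p < p') (φ' : p' →ₗ[R] M),
      Injective φ' ∧ ∀ x : p, φ' (inclusion hpp'.le x) = φ x := by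
  obtain ⟨q, hpq⟩ := ComplementedLattice.exists_isCompl p
  have hq : q ≠ ⊥ := fun h => hp (by simpa [h] using hpq.sup_eq_top)
  obtain ⟨S, hSq, hS⟩ := (IsSemisimpleModule.eq_bot_or_exists_simple_le q).resolve_left hq
  have := IsSimpleModule.nontrivial R S
  obtain ⟨C, hC⟩ := ComplementedLattice.exists_isCompl (LinearMap.range φ)
  have : Nontrivial (S →ₗ[R] C) := by
    rw [← Finite.one_lt_card_iff_nontrivial,
      ← card_linearMap_eq_of_isCompl_of_linearEquiv S hpq hC (LinearEquiv.ofInjective φ hφ),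
      Finite.one_lt_card_iff_nontrivial]
    exact ⟨_, _, LinearMap.ne_zero_of_injective (inclusion_injective hSq)⟩
  obtain ⟨g, hg⟩ := exists_ne (0 : S →ₗ[R] C)
  have hg_inj : Injective (C.subtype ∘ₗ g) :=
    C.injective_subtype.comp (g.injective_or_eq_zero.resolve_right hg)
  have hrange : Disjoint (LinearMap.range φ) (LinearMap.range (C.subtype ∘ₗ g)) :=
    hC.disjoint.mono_right <| by
      simpa only [LinearMap.range_comp, range_subtype] using map_subtype_le C _
  have hpS : Disjoint p S := hpq.disjoint.mono_right hSq
  obtain ⟨φ', hφ', hext⟩ := exists_injective_extend_sup hpS hφ hg_inj hrange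
  refine ⟨p ⊔ S, left_lt_sup.2 fun hSp => ?_, φ', hφ', hext⟩
  exact (isSimpleModule_iff_isAtom.1 hS).1 (hpS.eq_bot_of_ge hSp)

theorem Submodule.exists_linearEquiv_extend (p : Submodule R M) {φ : p →ₗ[R] M}
    (hφ : Injective φ) : ∃ e : M ≃ₗ[R] M, ∀ x : p, e x = φ x := by
  induction p using WellFoundedGT.induction with
  | _ p ih =>
  by_cases hp : p = ⊤
  · subst hp
    exact ⟨.ofBijective (φ ∘ₗ topEquiv.symm.toLinearMap)
      (Finite.injective_iff_bijective.1 (hφ.comp topEquiv.symm.injective)), fun x => rfl⟩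
  · obtain ⟨p', hpp', φ', hφ', hext⟩ := exists_injective_extend_of_ne_top hp hφ
    obtain ⟨e, he⟩ := ih p' hpp' hφ'
    exact ⟨e, fun x => (he _).trans (hext x)⟩

theorem LinearMap.exists_linearEquiv_comp_eq {N : Type*} [AddCommGroup N] [Module R N]
    {i f : N →ₗ[R] M} (hi : Injective i) (hf : Injective f) :
    ∃ e : M ≃ₗ[R] M, ∀ x, e (i x) = f x := by
  obtain ⟨e, he⟩ := (range i).exists_linearEquiv_extend
    (φ := f ∘ₗ (LinearEquiv.ofInjective i hi).symm.toLinearMap)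
    (hf.comp (LinearEquiv.ofInjective i hi).symm.injective)
  refine ⟨e, fun x => ?_⟩
  simpa using he (LinearEquiv.ofInjective i hi x)

end Ring

theorem AddCommGroup.isSemisimpleModule_int_of_nsmul_eq_zero {G : Type*} [AddCommGroup G] {n : ℕ}
    (hn : Squarefree n) (h : ∀ x : G, n • x = 0) : IsSemisimpleModule ℤ G := by
  have : NeZero n := ⟨hn.ne_zero⟩
  let _ : Module (ZMod n) G := AddCommMonoid.zmodModule h
  have : IsReduced (ZMod n) := isReduced_zmod.2 (Or.inl hn)
  have : IsSemisimpleRing (ZMod n) := IsArtinianRing.isSemisimpleRing_of_isReduced _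
  have : RingHomSurjective (Int.castRingHom (ZMod n)) := ⟨ZMod.ringHom_surjective _⟩
  let l : G →ₛₗ[Int.castRingHom (ZMod n)] G :=
    { toFun := id
      map_add' := fun _ _ => rfl
      map_smul' := fun m x => (Int.cast_smul_eq_zsmul _ m x).symm }
  exact (l.isSemisimpleModule_iff_of_bijective bijective_id).2 IsSemisimpleRing.isSemisimpleModule

/-- Let `K` be a finite abelian group whose exponent is squarefree, `L ≤ K` a subgroup and
`φ : L → K` an injective homomorphism. Then `φ` extends to an automorphism `ψ` of `K`. -/
theorem extend_to_automorphism {K : Type*} [CommGroup K] [Finite K]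
    (hexp : Squarefree (Monoid.exponent K))
    (L : Subgroup K) (φ : ↥L →* K) (hφ : Function.Injective φ) :
    ∃ ψ : K ≃* K, ∀ l : ↥L, ψ ↑l = φ l := by
  have : IsSemisimpleModule ℤ (Additive K) :=
    AddCommGroup.isSemisimpleModule_int_of_nsmul_eq_zero
      (AddMonoid.exponent_additive (G := K) ▸ hexp) AddMonoid.exponent_nsmul_eq_zero
  obtain ⟨e, he⟩ := LinearMap.exists_linearEquiv_comp_eq
    (i := L.subtype.toAdditive.toIntLinearMap) (f := φ.toAdditive.toIntLinearMap)
    Subtype.val_injective hφ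
  exact ⟨MulEquiv.toAdditive.symm e.toAddEquiv, fun l => he (Additive.ofMul l)⟩
end

section
/- Let F be a fusion system on a finite group S such that every morphism of F extends to an F-automorphism of S, i.e., for every subgroup L ≤ S and every φ ∈ Hom_F(L,S) there exists ψ ∈ Aut_F(S) := Hom_F(S,S) with ψ|_L = φ. For each ψ ∈ Aut_F(S), let S_ψ denote the S-S-biset with underlying set S, left action by left multiplication and right action x·s := x ψ(s). Then the disjoint union Ω = ⊔_{ψ ∈ Aut_F(S)} S_ψ is a left F-stable S-S-biset. -/
/-!
Extend `φ ∈ Hom_F(Q, S)` to `ψ ∈ Aut_F(S)`. Then `(χ, x) ↦ (ψ ∘ χ, ψ x)` maps the summand `S_χ`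
to `S_{ψ ∘ χ}` and satisfies `ψ (q x χ(s)) = ψ(q) ψ(x) (ψ ∘ χ)(s)`, so it is an isomorphism
`_Q Ω ≅ _φ Ω`: it is injective because `ψ` is, hence bijective because `S` is finite.
-/

open Function

section

variable {S : Type*} [Group S]

def ofTopEnd (ψ : ↥(⊤ : Subgroup S) →* ↥(⊤ : Subgroup S)) : S →* S :=
  (Subgroup.topEquiv.toMonoidHom.comp ψ).comp Subgroup.topEquiv.symm.toMonoidHom

theorem ofTopEnd_comp (ψ χ : ↥(⊤ : Subgroup S) →* ↥(⊤ : Subgroup S)) :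
    ofTopEnd (ψ.comp χ) = (ofTopEnd ψ).comp (ofTopEnd χ) :=
  rfl

theorem ofTopEnd_injective {ψ : ↥(⊤ : Subgroup S) →* ↥(⊤ : Subgroup S)} (hψ : Injective ψ) :
    Injective (ofTopEnd ψ) :=
  Subgroup.topEquiv.injective.comp (hψ.comp Subgroup.topEquiv.symm.injective)

/-- The biset `⊔_{i ∈ ι} S_{ρ i}`. -/
def autUnionBiset {ι : Type*} (ρ : ι → S →* S) : Biset S (ι × S) where
  smul u p := (p.1, u * p.2)
  rsmul p s := (p.1, p.2 * ρ p.1 s)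
  one_smul _ := by simp
  mul_smul _ _ _ := by simp [mul_assoc]
  rsmul_one _ := by simp
  rsmul_mul _ _ _ := by simp [mul_assoc]
  smul_rsmul _ _ _ := by simp [mul_assoc]

namespace autUnionBiset

variable {ι : Type*} (ρ : ι → S →* S)

theorem leftFree : (autUnionBiset ρ).LeftFree := fun u p h => by
  simpa [autUnionBiset] using congrArg Prod.snd h

theorem prodMap_smul_rsmul {σ : ι → ι} {ψ : S →* S} (hσ : ∀ i, ρ (σ i) = ψ.comp (ρ i))
    (q s : S) (p : ι × S) :
    Prod.map σ ψ ((autUnionBiset ρ).rsmul ((autUnionBiset ρ).smul q p) s) =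
      (autUnionBiset ρ).rsmul ((autUnionBiset ρ).smul (ψ q) (Prod.map σ ψ p)) s := by
  simp [autUnionBiset, hσ]

end autUnionBiset

end

/-- Let `F` be a fusion system on a finite group `S` in which every morphism extends to an
`F`-automorphism of `S`. Then the disjoint union `Ω = ⊔_{ψ ∈ Aut_F(S)} S_ψ` (where `S_ψ` is
`S` with left action by left multiplication and right action `x • s = x ψ(s)`) is a left
`F`-stable `S`-`S`-biset. -/
theorem autUnion_leftFStable {S : Type*} [Group S] [Finite S] (F : FusionSystem S)
    (hext : ∀ (L : Subgroup S), ∀ φ ∈ F.Hom L ⊤, ∃ ψ ∈ F.Hom ⊤ ⊤,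
      ∀ l : ↥L, ψ ⟨↑l, Subgroup.mem_top (↑l : S)⟩ = φ l) :
    ∃ B : Biset S (↥(F.Hom ⊤ ⊤) × S),
      (∀ (u : S) (p : ↥(F.Hom ⊤ ⊤) × S), B.smul u p = (p.1, u * p.2)) ∧
        (∀ (p : ↥(F.Hom ⊤ ⊤) × S) (s : S),
          B.rsmul p s = (p.1, p.2 * ↑(p.1.1 ⟨s, Subgroup.mem_top s⟩))) ∧
        B.LeftFStable F := by
  refine ⟨autUnionBiset fun χ : F.Hom ⊤ ⊤ => ofTopEnd χ.1, fun _ _ => rfl, fun _ _ => rfl,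
    autUnionBiset.leftFree _, fun Q φ hφ => ?_⟩
  obtain ⟨ψ, hψ, hψφ⟩ := hext Q φ hφ
  let σ : F.Hom ⊤ ⊤ → F.Hom ⊤ ⊤ := fun χ => ⟨ψ.comp χ, F.comp_mem χ.2 hψ⟩
  have hσ : Injective σ := fun χ₁ χ₂ h =>
    Subtype.ext ((MonoidHom.cancel_left (F.injective hψ)).1 (congrArg Subtype.val h))
  have : Finite (↥(⊤ : Subgroup S) →* ↥(⊤ : Subgroup S)) := .of_injective _ DFunLike.coe_injective
  have hbij : Bijective (Prod.map σ (ofTopEnd ψ)) :=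
    Finite.injective_iff_bijective.1 (hσ.prodMap (ofTopEnd_injective (F.injective hψ)))
  refine ⟨Equiv.ofBijective _ hbij, fun q x s => ?_⟩
  rw [← hψφ q]
  exact autUnionBiset.prodMap_smul_rsmul (fun χ : F.Hom ⊤ ⊤ => ofTopEnd χ.1) (σ := σ)
    (fun χ => ofTopEnd_comp ψ χ.1) (↑q) s x
end
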